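/- (Main order-bound theorem) Let C be a divisor, S and S' finite sets of rational points, and A_0, A_1, ..., A_n a sequence of divisors with A_i = A_{i-1} + P_i for rational points P_i. Define Δ = {i : A_i ∈ Γ_{P_i} and A_i - C ∉ Γ_{P_i}}, Δ' = {i : A_i ∉ Γ_{P_i} and A_i - C ∈ Γ_{P_i}}, I = {i : P_i ∈ S}, I' = {i : P_i ∈ S'}. Then γ(C; S, S') >= |Δ ∩ I'| + |Δ' ∩ I| - |Δ'|. -/

import Mathlib

noncomputable section

/-- Degree of a divisor, where divisors on the curve are modeled as finitely
supported integer valued functions on the set of rational points. -/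
def degr {Point : Type*} (D : Point →₀ ℤ) : ℤ := D.sum fun _ n => n

/-- An abstract model of a smooth projective absolutely irreducible curve over a field,
recording the data used in the paper: the dimension `l D` of the Riemann-Roch space
`L(D)`, the genus `g`, a canonical divisor `K`, and linear equivalence `lin`,
together with their basic properties (Riemann-Roch, monotonicity, semigroup
properties of nongaps, etc.). -/
structure Curve (Point : Type*) where
  /-- `l D = dim L(D)` -/
  l : (Point →₀ ℤ) → ℕ
  /-- the genus -/
  g : ℕ
  /-- a canonical divisor -/
  K : Point →₀ ℤ
  /-- linear equivalence of divisors -/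
  lin : (Point →₀ ℤ) → (Point →₀ ℤ) → Prop
  lin_refl : ∀ A, lin A A
  lin_symm : ∀ {A B}, lin A B → lin B A
  lin_trans : ∀ {A B C}, lin A B → lin B C → lin A C
  lin_add : ∀ {A B} (E : Point →₀ ℤ), lin A B → lin (A + E) (B + E)
  deg_lin : ∀ {A B}, lin A B → degr A = degr B
  l_lin : ∀ {A B}, lin A B → l A = l B
  l_zero : l 0 = 1
  l_neg : ∀ {D}, degr D < 0 → l D = 0
  l_mono : ∀ (D : Point →₀ ℤ) (P : Point), l D ≤ l (D + Finsupp.single P 1)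
  l_step : ∀ (D : Point →₀ ℤ) (P : Point), l (D + Finsupp.single P 1) ≤ l D + 1
  /-- Riemann-Roch -/
  rr : ∀ D : Point →₀ ℤ, (l D : ℤ) - l (K - D) = degr D + 1 - g
  lin_of_deg_zero : ∀ {D}, l D ≠ 0 → degr D = 0 → lin D 0
  /-- the semigroup property of `Γ_P` -/
  gamma_add : ∀ (P : Point) {A B}, l A ≠ l (A - Finsupp.single P 1) →
      l B ≠ l (B - Finsupp.single P 1) → l (A + B) ≠ l (A + B - Finsupp.single P 1)
  eff_add : ∀ {A B}, l A ≠ 0 → l B ≠ 0 → l (A + B) ≠ 0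
  point_nongap : ∀ {P Q : Point}, P ≠ Q →
      l (Finsupp.single P 1) ≠ l (Finsupp.single P 1 - Finsupp.single Q 1)

variable {Point : Type*}

/-- `Γ_P` : divisor (classes) with no base point at `P`, i.e. `L(A) ≠ L(A-P)`. -/
def GammaP (X : Curve Point) (P : Point) : Set (Point →₀ ℤ) :=
  {A | X.l A ≠ X.l (A - Finsupp.single P 1)}

/-- `Γ_S = ∩_{P ∈ S} Γ_P`, with the convention `Γ_∅ = Γ = {A : L(A) ≠ 0}`. -/
def GammaS (X : Curve Point) (S : Finset Point) : Set (Point →₀ ℤ) :=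
  {A | (S = ∅ → X.l A ≠ 0) ∧ ∀ P ∈ S, A ∈ GammaP X P}

/-- `Γ(C; S, S') = {A : A ∈ Γ_S and A - C ∈ Γ_{S'}}`. -/
def GammaSet (X : Curve Point) (C : Point →₀ ℤ) (S S' : Finset Point) :
    Set (Point →₀ ℤ) :=
  {A | A ∈ GammaS X S ∧ A - C ∈ GammaS X S'}

/-- `γ(C; S, S') = min {deg A : A ∈ Γ(C; S, S')}`. -/
def gammaMin (X : Curve Point) (C : Point →₀ ℤ) (S S' : Finset Point) : ℤ :=
  sInf (degr '' GammaSet X C S S')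

/-- `Δ = {i : A_i ∈ Γ_{P_i} and A_i - C ∉ Γ_{P_i}}` for indices `1 ≤ i ≤ n`. -/
def Delta (X : Curve Point) (C : Point →₀ ℤ) (n : ℕ) (A : ℕ → Point →₀ ℤ)
    (P : ℕ → Point) : Set ℕ :=
  {i | 1 ≤ i ∧ i ≤ n ∧ A i ∈ GammaP X (P i) ∧ A i - C ∉ GammaP X (P i)}

/-- `Δ' = {i : A_i ∉ Γ_{P_i} and A_i - C ∈ Γ_{P_i}}` for indices `1 ≤ i ≤ n`. -/
def Delta' (X : Curve Point) (C : Point →₀ ℤ) (n : ℕ) (A : ℕ → Point →₀ ℤ)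
    (P : ℕ → Point) : Set ℕ :=
  {i | 1 ≤ i ∧ i ≤ n ∧ A i ∉ GammaP X (P i) ∧ A i - C ∈ GammaP X (P i)}

/-! The divisor `D` realising `γ(C; S, S')` has no base point in common with `D - C`: removing
a common base point would give a member of `Γ(C; S, S')` of smaller degree. Along the chain,
the step `A_{i-1} → A_i` raises `l(A) - l(A - D)` by `[A_i ∈ Γ_{P_i}] - [A_i - D ∈ Γ_{P_i}]`,
and the semigroup property of `Γ_{P_i}`, applied to `A_i - C = (A_i - D) + (D - C)` and
`A_i = (A_i - D) + D`, shows this jump is `1` on `Δ ∩ I'` and is negative only on `Δ' \ I`.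
The jumps telescope, and Riemann–Roch bounds their total by `deg D`. -/

lemma degr_sub (A B : Point →₀ ℤ) : degr (A - B) = degr A - degr B :=
  Finsupp.sum_sub_index fun _ _ _ => rfl

lemma degr_single (P : Point) (m : ℤ) : degr (Finsupp.single P m) = m :=
  Finsupp.sum_single_index rfl

lemma Finset.sum_Icc_one_sub_pred {M : Type*} [AddCommGroup M] (f : ℕ → M) (n : ℕ) :
    ∑ i ∈ Finset.Icc 1 n, (f i - f (i - 1)) = f n - f 0 := by
  induction n with
  | zero => simp
  | succ n ih =>
    rw [Finset.sum_Icc_succ_top (by omega), ih, Nat.add_sub_cancel]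
    abel

lemma Set.ncard_eq_sum_indicator_of_subset_Icc {s : Set ℕ} {n : ℕ} (hs : s ⊆ Set.Icc 1 n) :
    (s.ncard : ℤ) = ∑ i ∈ Finset.Icc 1 n, s.indicator 1 i := by
  classical
  have hfilter : ((Finset.Icc 1 n).filter (· ∈ s) : Set ℕ) = s := by
    ext i
    simpa using fun hi => hs hi
  simp only [Set.indicator_apply, Pi.one_apply]
  rw [Finset.sum_boole, ← Set.ncard_coe_finset, hfilter]

namespace Curve

variable (X : Curve Point)

lemma l_sub_single_le (A : Point →₀ ℤ) (P : Point) :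
    X.l (A - Finsupp.single P 1) ≤ X.l A := by
  have h := X.l_mono (A - Finsupp.single P 1) P
  rwa [sub_add_cancel] at h

lemma l_le_l_sub_single_add_one (A : Point →₀ ℤ) (P : Point) :
    X.l A ≤ X.l (A - Finsupp.single P 1) + 1 := by
  have h := X.l_step (A - Finsupp.single P 1) P
  rwa [sub_add_cancel] at h

lemma l_sub_single_eq_of_not_mem_gammaP {A : Point →₀ ℤ} {P : Point} (h : A ∉ GammaP X P) :
    X.l (A - Finsupp.single P 1) = X.l A :=
  (not_not.mp h).symm

lemma l_eq_l_sub_single_add_one_of_mem_gammaP {A : Point →₀ ℤ} {P : Point}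
    (h : A ∈ GammaP X P) : X.l A = X.l (A - Finsupp.single P 1) + 1 := by
  have := X.l_sub_single_le A P
  have := X.l_le_l_sub_single_add_one A P
  have : X.l A ≠ X.l (A - Finsupp.single P 1) := h
  omega

lemma degr_nonneg_of_l_ne_zero {A : Point →₀ ℤ} (hA : X.l A ≠ 0) : 0 ≤ degr A :=
  le_of_not_gt fun h => hA (X.l_neg h)

lemma l_le_l_add {D : Point →₀ ℤ} (hD : X.l D ≠ 0) (E : Point →₀ ℤ) :
    X.l E ≤ X.l (E + D) := by
  suffices key : ∀ N : ℕ, ∀ E D : Point →₀ ℤ, degr E + degr D < N → X.l D ≠ 0 →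
      X.l E ≤ X.l (E + D) from
    key ((degr E + degr D).toNat + 1) E D (by omega) hD
  intro N
  induction N with
  | zero =>
    intro E D hdeg hD
    have hE : X.l E = 0 := X.l_neg (by have := X.degr_nonneg_of_l_ne_zero hD; omega)
    omega
  | succ N ih =>
    intro E D hdeg hD
    obtain rfl | hE := eq_or_ne E 0
    · rw [zero_add, X.l_zero]; omega
    -- any point `Q` will do; `E ≠ 0` just supplies one
    obtain ⟨Q, -⟩ := Finsupp.ne_iff.mp hE
    have hdegE := degr_sub E (Finsupp.single Q 1)
    have hdegD := degr_sub D (Finsupp.single Q 1)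
    rw [degr_single] at hdegE hdegD
    by_cases hEQ : E ∈ GammaP X Q
    · by_cases hDQ : D ∈ GammaP X Q
      · have hED := X.l_eq_l_sub_single_add_one_of_mem_gammaP (X.gamma_add Q hEQ hDQ)
        have ih' := ih (E - Finsupp.single Q 1) D (by omega) hD
        rw [sub_add_eq_add_sub] at ih'
        have := X.l_eq_l_sub_single_add_one_of_mem_gammaP hEQ
        omega
      · have hDQ' := X.l_sub_single_eq_of_not_mem_gammaP hDQ
        have ih' := ih E (D - Finsupp.single Q 1) (by omega) (hDQ' ▸ hD)
        rw [← add_sub_assoc] at ih'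
        have := X.l_sub_single_le (E + D) Q
        omega
    · have ih' := ih (E - Finsupp.single Q 1) D (by omega) hD
      rw [sub_add_eq_add_sub] at ih'
      have := X.l_sub_single_le (E + D) Q
      have := X.l_sub_single_eq_of_not_mem_gammaP hEQ
      omega

lemma l_sub_l_sub_le_degr {D : Point →₀ ℤ} (hD : X.l D ≠ 0) (F : Point →₀ ℤ) :
    (X.l F : ℤ) - X.l (F - D) ≤ degr D := by
  have hrr := X.rr F
  have hrr' := X.rr (F - D)
  rw [degr_sub, show X.K - (F - D) = X.K - F + D by abel] at hrr'
  have := X.l_le_l_add hD (X.K - F)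
  omega

lemma l_ne_zero_of_mem_gammaS {A : Point →₀ ℤ} {S : Finset Point} (hA : A ∈ GammaS X S) :
    X.l A ≠ 0 := by
  obtain rfl | ⟨P, hP⟩ := S.eq_empty_or_nonempty
  · exact hA.1 rfl
  · have := X.l_eq_l_sub_single_add_one_of_mem_gammaP (hA.2 P hP)
    omega

lemma sub_single_mem_gammaS {A : Point →₀ ℤ} {S : Finset Point} {P : Point}
    (hA : A ∈ GammaS X S) (hP : A ∉ GammaP X P) : A - Finsupp.single P 1 ∈ GammaS X S := by
  have hl := X.l_sub_single_eq_of_not_mem_gammaP hP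
  refine ⟨fun hS => hl ▸ hA.1 hS, fun R hR => ?_⟩
  have hAR := X.l_eq_l_sub_single_add_one_of_mem_gammaP (hA.2 R hR)
  have := X.l_sub_single_le (A - Finsupp.single R 1) P
  show X.l (A - Finsupp.single P 1) ≠ X.l (A - Finsupp.single P 1 - Finsupp.single R 1)
  rw [sub_right_comm]
  omega

lemma exists_isMinOn_degr_gammaSet {C : Point →₀ ℤ} {S S' : Finset Point}
    (hne : (GammaSet X C S S').Nonempty) :
    ∃ D ∈ GammaSet X C S S', IsMinOn degr (GammaSet X C S S') D ∧
      degr D = gammaMin X C S S' := by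
  have hbdd : BddBelow (degr '' GammaSet X C S S') := by
    refine ⟨0, ?_⟩
    rintro _ ⟨B, hB, rfl⟩
    exact X.degr_nonneg_of_l_ne_zero (X.l_ne_zero_of_mem_gammaS hB.1)
  obtain ⟨D, hD, hdeg⟩ := Int.csInf_mem (hne.image degr) hbdd
  refine ⟨D, hD, isMinOn_iff.mpr fun B hB => ?_, hdeg⟩
  rw [hdeg]
  exact csInf_le hbdd ⟨B, hB, rfl⟩

lemma mem_gammaP_or_sub_mem_gammaP_of_isMinOn {C D : Point →₀ ℤ} {S S' : Finset Point}
    (hD : D ∈ GammaSet X C S S') (hmin : IsMinOn degr (GammaSet X C S S') D) (Q : Point) :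
    D ∈ GammaP X Q ∨ D - C ∈ GammaP X Q := by
  by_contra! ⟨hDQ, hDCQ⟩
  have hmem : D - Finsupp.single Q 1 ∈ GammaSet X C S S' := by
    refine ⟨X.sub_single_mem_gammaS hD.1 hDQ, ?_⟩
    rw [sub_right_comm]
    exact X.sub_single_mem_gammaS hD.2 hDCQ
  have := isMinOn_iff.mp hmin _ hmem
  rw [degr_sub, degr_single] at this
  omega

def jump (A : Point →₀ ℤ) (P : Point) : ℤ := X.l A - X.l (A - Finsupp.single P 1)

lemma jump_of_mem_gammaP {A : Point →₀ ℤ} {P : Point} (h : A ∈ GammaP X P) :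
    X.jump A P = 1 := by
  have := X.l_eq_l_sub_single_add_one_of_mem_gammaP h
  unfold jump
  omega

lemma jump_of_not_mem_gammaP {A : Point →₀ ℤ} {P : Point} (h : A ∉ GammaP X P) :
    X.jump A P = 0 := by
  rw [jump, X.l_sub_single_eq_of_not_mem_gammaP h, sub_self]

lemma jump_eq_zero_or_one (A : Point →₀ ℤ) (P : Point) : X.jump A P = 0 ∨ X.jump A P = 1 := by
  by_cases h : A ∈ GammaP X P
  · exact .inr (X.jump_of_mem_gammaP h)
  · exact .inl (X.jump_of_not_mem_gammaP h)

section Jumps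

variable {C D : Point →₀ ℤ} {S S' : Finset Point}

lemma jump_sub_jump_eq_one (hD : D ∈ GammaSet X C S S') {A : Point →₀ ℤ} {Q : Point}
    (hA : A ∈ GammaP X Q) (hAC : A - C ∉ GammaP X Q) (hQ : Q ∈ S') :
    X.jump A Q - X.jump (A - D) Q = 1 := by
  have hAD : A - D ∉ GammaP X Q := fun hAD => hAC <| by
    have := X.gamma_add Q hAD (hD.2.2 Q hQ)
    rwa [sub_add_sub_cancel] at this
  rw [X.jump_of_mem_gammaP hA, X.jump_of_not_mem_gammaP hAD, sub_zero]

lemma jump_sub_jump_nonneg (hD : D ∈ GammaSet X C S S') {A : Point →₀ ℤ} {Q : Point}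
    (hQ : D ∈ GammaP X Q ∨ D - C ∈ GammaP X Q)
    (hA : A ∉ GammaP X Q → A - C ∈ GammaP X Q → Q ∈ S) :
    0 ≤ X.jump A Q - X.jump (A - D) Q := by
  by_cases hAD : A - D ∈ GammaP X Q
  · have hA_of : D ∈ GammaP X Q → A ∈ GammaP X Q := fun h => by
      have := X.gamma_add Q hAD h
      rwa [sub_add_cancel] at this
    have hAC_of : D - C ∈ GammaP X Q → A - C ∈ GammaP X Q := fun h => by
      have := X.gamma_add Q hAD h
      rwa [sub_add_sub_cancel] at this
    have hAQ : A ∈ GammaP X Q := by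
      rcases hQ with hDQ | hDCQ
      · exact hA_of hDQ
      · by_contra hAQ
        exact hAQ (hA_of (hD.1.2 Q (hA hAQ (hAC_of hDCQ))))
    rw [X.jump_of_mem_gammaP hAQ, X.jump_of_mem_gammaP hAD, sub_self]
  · rw [X.jump_of_not_mem_gammaP hAD, sub_zero]
    rcases X.jump_eq_zero_or_one A Q with h | h <;> omega

lemma indicator_sub_indicator_le_jump_sub_jump (hD : D ∈ GammaSet X C S S') {n : ℕ}
    {A : ℕ → Point →₀ ℤ} {P : ℕ → Point} {i : ℕ} (hi : i ∈ Finset.Icc 1 n)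
    (hbp : D ∈ GammaP X (P i) ∨ D - C ∈ GammaP X (P i)) :
    (Delta X C n A P ∩ {i | P i ∈ S'}).indicator 1 i
        - (Delta' X C n A P \ {i | P i ∈ S}).indicator 1 i
      ≤ X.jump (A i) (P i) - X.jump (A i - D) (P i) := by
  classical
  obtain ⟨hi1, hin⟩ := Finset.mem_Icc.mp hi
  simp only [Set.indicator_apply, Pi.one_apply]
  split_ifs with hΔI' hΔ'I hΔ'I
  · exact absurd hΔI'.1.2.2.1 hΔ'I.1.2.2.1
  · rw [X.jump_sub_jump_eq_one hD hΔI'.1.2.2.1 hΔI'.1.2.2.2 hΔI'.2, sub_zero]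
  · rcases X.jump_eq_zero_or_one (A i) (P i) with h | h <;>
      rcases X.jump_eq_zero_or_one (A i - D) (P i) with h' | h' <;> omega
  · rw [sub_zero]
    refine X.jump_sub_jump_nonneg hD hbp fun hA hAC => ?_
    by_contra hPS
    exact hΔ'I ⟨⟨hi1, hin, hA, hAC⟩, hPS⟩

end Jumps

lemma sum_jump_sub_jump_le_degr {D : Point →₀ ℤ} (hD : X.l D ≠ 0) {n : ℕ}
    {A : ℕ → Point →₀ ℤ} {P : ℕ → Point}
    (hA : ∀ i, 1 ≤ i → i ≤ n → A i = A (i - 1) + Finsupp.single (P i) 1) :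
    ∑ i ∈ Finset.Icc 1 n, (X.jump (A i) (P i) - X.jump (A i - D) (P i)) ≤ degr D := by
  set f : (Point →₀ ℤ) → ℤ := fun B => X.l B - X.l (B - D)
  have hstep : ∀ i ∈ Finset.Icc 1 n,
      X.jump (A i) (P i) - X.jump (A i - D) (P i) = f (A i) - f (A (i - 1)) := by
    intro i hi
    obtain ⟨hi1, hin⟩ := Finset.mem_Icc.mp hi
    have hprev : A (i - 1) = A i - Finsupp.single (P i) 1 := by
      rw [hA i hi1 hin, add_sub_cancel_right]
    simp only [f, jump, hprev, sub_right_comm (A i) D]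
    ring
  rw [Finset.sum_congr rfl hstep, Finset.sum_Icc_one_sub_pred]
  have hn := X.l_sub_l_sub_le_degr hD (A n)
  have h0 := X.l_le_l_add hD (A 0 - D)
  rw [sub_add_cancel] at h0
  simp only [f]
  omega

end Curve

/-- (Main order-bound theorem) Let `C` be a divisor, `S` and `S'` finite sets of rational
points, and `A_0, A_1, ..., A_n` a sequence of divisors with `A_i = A_{i-1} + P_i` for
rational points `P_i`.  With
`Δ  = {i : A_i ∈ Γ_{P_i} and A_i - C ∉ Γ_{P_i}}`,
`Δ' = {i : A_i ∉ Γ_{P_i} and A_i - C ∈ Γ_{P_i}}`,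
`I = {i : P_i ∈ S}` and `I' = {i : P_i ∈ S'}`, one has
`γ(C; S, S') ≥ |Δ ∩ I'| + |Δ' ∩ I| - |Δ'|`. -/
theorem main_order_bound (X : Curve Point) (C : Point →₀ ℤ) (S S' : Finset Point)
    (n : ℕ) (A : ℕ → Point →₀ ℤ) (P : ℕ → Point)
    (hA : ∀ i, 1 ≤ i → i ≤ n → A i = A (i - 1) + Finsupp.single (P i) 1)
    (hne : (GammaSet X C S S').Nonempty) :
    ((Delta X C n A P ∩ {i | P i ∈ S'}).ncard : ℤ)
        + ((Delta' X C n A P ∩ {i | P i ∈ S}).ncard : ℤ)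
        - ((Delta' X C n A P).ncard : ℤ)
      ≤ gammaMin X C S S' := by
  obtain ⟨D, hD, hmin, hdeg⟩ := X.exists_isMinOn_degr_gammaSet hne
  have hΔ : Delta X C n A P ⊆ Set.Icc 1 n := fun i hi => ⟨hi.1, hi.2.1⟩
  have hΔ' : Delta' X C n A P ⊆ Set.Icc 1 n := fun i hi => ⟨hi.1, hi.2.1⟩
  have hsum := Finset.sum_le_sum (s := Finset.Icc 1 n) fun i hi =>
    X.indicator_sub_indicator_le_jump_sub_jump (A := A) hD hi
      (X.mem_gammaP_or_sub_mem_gammaP_of_isMinOn hD hmin (P i))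
  rw [Finset.sum_sub_distrib,
    ← Set.ncard_eq_sum_indicator_of_subset_Icc (Set.inter_subset_left.trans hΔ),
    ← Set.ncard_eq_sum_indicator_of_subset_Icc (Set.sdiff_subset.trans hΔ')] at hsum
  have hsplit := Set.ncard_inter_add_ncard_sdiff_eq_ncard (Delta' X C n A P) {i | P i ∈ S}
    ((Set.finite_Icc 1 n).subset hΔ')
  have hdegD := X.sum_jump_sub_jump_le_degr (X.l_ne_zero_of_mem_gammaS hD.1) hA
  rw [← hsplit, ← hdeg]
  push_cast
  linarith
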